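/- arXiv:2507.15488 — 3 statements merged into one kernel-verified Lean document; each statement's English description precedes it below -/
import Mathlib

section
/- Let n, N be positive integers, let z_1, …, z_n be pairwise distinct nonzero complex numbers, let λ_1, …, λ_N be real numbers and a_1, …, a_N be complex numbers, and let ℓ_0 ∈ {1, …, N} with a_{ℓ_0} = 0 and a_ℓ ≠ 0 for every ℓ ≠ ℓ_0; assume z_k ≠ a_ℓ for all k, ℓ. Assume that for every k = 1, …, n: ∑_{j ≠ k} 1/(z_k − z_j) + ∑_{ℓ=1}^N λ_ℓ/(z_k − a_ℓ) = 0. Set z* := 1/conj(z) for z ≠ 0. Then the points z_1*, …, z_n* satisfy, for every k = 1, …, n: ∑_{j ≠ k} 1/(z_k* − z_j*) + (−n + 1 − ∑_{ℓ=1}^N λ_ℓ)/z_k* + ∑_{ℓ=1, ℓ≠ℓ_0}^N λ_ℓ/(z_k* − a_ℓ*) = 0. -/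
/-! Complex conjugation preserves the equilibrium equations, so only the inversion `w ↦ w⁻¹` needs
work. By `1 / (c⁻¹ - b⁻¹) = c - c² / (c - b)` every inverted force term is `-c²` times the original
one plus a constant; the multiples of the original terms sum to zero by equilibrium, and the
constants, together with the term of the charge at the origin (where the identity fails), give the
new charge `1 - n - ∑ λ` at the origin. -/

open Complex Finset

section Field

variable {K : Type*} [Field K]

lemma one_div_inv_sub_inv {c b : K} (hc : c ≠ 0) (hb : b ≠ 0) (hcb : c ≠ b) :
    1 / (c⁻¹ - b⁻¹) = c - c ^ 2 / (c - b) := by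
  have hcb' : c - b ≠ 0 := sub_ne_zero.mpr hcb
  have hbc : b - c ≠ 0 := sub_ne_zero.mpr hcb.symm
  field_simp
  ring

lemma sum_div_inv_sub_inv {κ : Type*} (s : Finset κ) (μ b : κ → K) {c : K} (hc : c ≠ 0)
    (hb : ∀ l ∈ s, b l ≠ 0) (hcb : ∀ l ∈ s, c ≠ b l) :
    ∑ l ∈ s, μ l / (c⁻¹ - (b l)⁻¹) = c * ∑ l ∈ s, μ l - c ^ 2 * ∑ l ∈ s, μ l / (c - b l) := by
  rw [mul_sum, mul_sum, ← sum_sub_distrib]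
  refine sum_congr rfl fun l hl => ?_
  rw [div_eq_mul_one_div, one_div_inv_sub_inv hc (hb l hl) (hcb l hl)]
  ring

theorem equilibrium_inv_of_equilibrium {ι κ : Type*} [Fintype ι] [DecidableEq ι] [Fintype κ]
    [DecidableEq κ] (w : ι → K) (μ b : κ → K) (k : ι) (l₀ : κ) (hw : ∀ j, w j ≠ 0)
    (hwk : ∀ j ≠ k, w k ≠ w j)
    (hb₀ : b l₀ = 0) (hb : ∀ l ≠ l₀, b l ≠ 0) (hwb : ∀ l, w k ≠ b l)
    (heq : ∑ j ∈ univ.erase k, 1 / (w k - w j) + ∑ l, μ l / (w k - b l) = 0) :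
    ∑ j ∈ univ.erase k, 1 / ((w k)⁻¹ - (w j)⁻¹) +
      (-(Fintype.card ι : K) + 1 - ∑ l, μ l) / (w k)⁻¹ +
      ∑ l ∈ univ.erase l₀, μ l / ((w k)⁻¹ - (b l)⁻¹) = 0 := by
  set c := w k
  have hc : c ≠ 0 := hw k
  have hunit := sum_div_inv_sub_inv (univ.erase k) 1 w hc (fun j _ => hw j)
    (fun j hj => hwk j (ne_of_mem_erase hj))
  have hext := sum_div_inv_sub_inv (univ.erase l₀) μ b hc (fun l hl => hb l (ne_of_mem_erase hl))
    (fun l _ => hwb l)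
  have hcard : ((univ.erase k).card : K) + 1 = Fintype.card ι := by
    rw [← Nat.cast_add_one, card_erase_add_one (mem_univ k), card_univ]
  have hsplit := add_sum_erase univ (fun l => μ l / (c - b l)) (mem_univ l₀)
  have hsplitμ := add_sum_erase univ μ (mem_univ l₀)
  simp only [Pi.one_apply, sum_const, nsmul_eq_mul, mul_one] at hunit
  simp only [hb₀, sub_zero] at hsplit
  rw [hunit, hext, div_inv_eq_mul, ← hcard, ← hsplitμ]
  rw [← hsplit] at heq
  field_simp at heq
  linear_combination (-c) * heq

end Field

theorem inverted_equilibrium_origin_charge_general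
    (n N : ℕ)
    (z : Fin n → ℂ) (hzinj : Function.Injective z) (hz0 : ∀ k, z k ≠ 0)
    (lam : Fin N → ℝ) (a : Fin N → ℂ) (l0 : Fin N)
    (hal0 : a l0 = 0) (ha0 : ∀ l, l ≠ l0 → a l ≠ 0) (hza : ∀ k l, z k ≠ a l)
    (heq : ∀ k, (∑ j ∈ Finset.univ.erase k, 1 / (z k - z j)) +
      (∑ l, (lam l : ℂ) / (z k - a l)) = 0) :
    ∀ k, (∑ j ∈ Finset.univ.erase k,
        1 / ((starRingEnd ℂ (z k))⁻¹ - (starRingEnd ℂ (z j))⁻¹)) +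
      (-(n : ℂ) + 1 - ∑ l, (lam l : ℂ)) / (starRingEnd ℂ (z k))⁻¹ +
      (∑ l ∈ Finset.univ.erase l0,
        (lam l : ℂ) / ((starRingEnd ℂ (z k))⁻¹ - (starRingEnd ℂ (a l))⁻¹)) = 0 := by
  intro k
  have hconj := congrArg (starRingEnd ℂ) (heq k)
  simp only [map_add, map_sum, map_div₀, map_sub, map_one, conj_ofReal, map_zero] at hconj
  have key := equilibrium_inv_of_equilibrium (fun j => starRingEnd ℂ (z j)) (fun l => (lam l : ℂ))
    (fun l => starRingEnd ℂ (a l)) k l0 (fun j => (map_ne_zero _).mpr (hz0 j))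
    (fun j hj => (starRingEnd ℂ).injective.ne (hzinj.ne hj.symm))
    (by rw [hal0, map_zero]) (fun l hl => (map_ne_zero _).mpr (ha0 l hl))
    (fun l => (starRingEnd ℂ).injective.ne (hza k l)) hconj
  rwa [Fintype.card_fin] at key

theorem inverted_equilibrium_origin_charge
    (n N : ℕ) (hn : 0 < n) (hN : 0 < N)
    (z : Fin n → ℂ) (hzinj : Function.Injective z) (hz0 : ∀ k, z k ≠ 0)
    (lam : Fin N → ℝ) (a : Fin N → ℂ) (l0 : Fin N)
    (hal0 : a l0 = 0) (ha0 : ∀ l, l ≠ l0 → a l ≠ 0) (hza : ∀ k l, z k ≠ a l)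
    (heq : ∀ k, (∑ j ∈ Finset.univ.erase k, 1 / (z k - z j)) +
      (∑ l, (lam l : ℂ) / (z k - a l)) = 0) :
    ∀ k, (∑ j ∈ Finset.univ.erase k,
        1 / ((starRingEnd ℂ (z k))⁻¹ - (starRingEnd ℂ (z j))⁻¹)) +
      (-(n : ℂ) + 1 - ∑ l, (lam l : ℂ)) / (starRingEnd ℂ (z k))⁻¹ +
      (∑ l ∈ Finset.univ.erase l0,
        (lam l : ℂ) / ((starRingEnd ℂ (z k))⁻¹ - (starRingEnd ℂ (a l))⁻¹)) = 0 :=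
  inverted_equilibrium_origin_charge_general n N z hzinj hz0 lam a l0 hal0 ha0 hza heq
end

section
/- Let a > 0 be a real number and n ≥ 1, and let p_n be the degree-n OPA to 1/(1−z)^a in H². Suppose p_n has exactly n pairwise distinct complex roots w_1, …, w_n, and that w_k ≠ 0 and w_k ≠ 1 for every k. Then for every k = 1, …, n: ∑_{j ≠ k} 1/(w_k − w_j) + (a + 1/2)/(w_k − 1) − ((n + a)/2)/w_k = 0. That is, the zeros of p_n are in equilibrium in the field of a positive charge of magnitude a + 1/2 at z = 1 and a negative charge of magnitude (n + a)/2 at the origin. -/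
/-!
Write `z = e^{iθ}`, `f = (1 - z)^a` and `W = |f|² = (2 - 2 cos θ)^a`. Varying the minimiser `p`
in the direction `z^j`, `j ≤ n`, gives `∫ (1 - p f) conj (z^j f) dθ = 0`. As `f` is holomorphic
in the disc, `∫ z^j f dθ = 0` for `j ≥ 1` by Cauchy's theorem, so the moments
`∫ z^{-j} p(z) W dθ` vanish for `1 ≤ j ≤ n`. Integrating `d/dθ [z^m (z - 1) h(z) W]` over a
period gives a recurrence between such moments, and with it the moments `z^{-j}`, `0 ≤ j ≤ n`, of
`T = z(z - 1) p'' + ((a + 1 - n) z + n + a) p' - n a p` vanish. Since `deg T ≤ n`, this gives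
`∫ |T|² W dθ = 0`, hence `T = 0`. At a simple root `w` of `p` one has
`p''(w) = 2 p'(w) ∑_{j} 1 / (w - w_j)`, and `T(w) = 0` becomes the equilibrium relation after a
partial fraction decomposition.
-/

open Polynomial Complex

/-- The H² error functional `∫₀^{2π} |1 − p(e^{iθ})(1 − e^{iθ})^a|² dθ`
(principal complex power). -/
noncomputable def energyPow (a : ℝ) (p : Polynomial ℂ) : ℝ :=
  ∫ θ in (0:ℝ)..(2 * Real.pi),
    ‖(1 - p.eval (Complex.exp (θ * Complex.I)) *
      (1 - Complex.exp (θ * Complex.I)) ^ (a : ℂ))‖ ^ 2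

/-- `p` is the degree-`n` optimal polynomial approximant to `1/(1-z)^a` in H². -/
def IsOPAPow (a : ℝ) (n : ℕ) (p : Polynomial ℂ) : Prop :=
  p.degree ≤ (n : ℕ) ∧
    ∀ q : Polynomial ℂ, q.degree ≤ (n : ℕ) → energyPow a p ≤ energyPow a q

noncomputable section

open Set Metric
open scoped Real ComplexConjugate

theorem eq_zero_of_forall_two_mul_re_le {A : ℂ} {C : ℝ}
    (h : ∀ t : ℂ, 2 * (conj t * A).re ≤ ‖t‖ ^ 2 * C) : A = 0 := by
  set s : ℝ := 1 / (|C| + 1)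
  have hs : 0 < s := by positivity
  have hsC : s * C < 1 := by
    calc s * C ≤ s * |C| := by gcongr; exact le_abs_self C
      _ < 1 := by rw [div_mul_eq_mul_div, one_mul, div_lt_one (by positivity)]; linarith
  have key := h (s * A)
  rw [map_mul, conj_ofReal, mul_assoc, conj_mul', ← ofReal_pow, ← ofReal_mul, ofReal_re,
    norm_mul, norm_real, Real.norm_of_nonneg hs.le] at key
  have hle := mul_le_mul_of_nonneg_left hsC.le (by positivity : 0 ≤ s * ‖A‖ ^ 2)
  have : s * ‖A‖ ^ 2 ≤ 0 := by nlinarith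
  have : ‖A‖ ^ 2 ≤ 0 := by nlinarith
  simpa using this

theorem integral_norm_sub_mul_sq {u v : ℝ → ℂ} {α β : ℝ} (hu : Continuous u) (hv : Continuous v)
    (t : ℂ) :
    ∫ x in α..β, ‖u x - t * v x‖ ^ 2 = (∫ x in α..β, ‖u x‖ ^ 2)
      - 2 * (conj t * ∫ x in α..β, u x * conj (v x)).re + ‖t‖ ^ 2 * ∫ x in α..β, ‖v x‖ ^ 2 := by
  have hpt : ∀ x, ‖u x - t * v x‖ ^ 2 =
      ‖u x‖ ^ 2 - 2 * (conj t * (u x * conj (v x))).re + ‖t‖ ^ 2 * ‖v x‖ ^ 2 := by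
    intro x
    rw [← normSq_eq_norm_sq, normSq_sub, normSq_eq_norm_sq, normSq_eq_norm_sq, norm_mul, mul_pow,
      map_mul]
    ring_nf
  have hre : (conj t * ∫ x in α..β, u x * conj (v x)).re =
      ∫ x in α..β, (conj t * (u x * conj (v x))).re := by
    rw [← intervalIntegral.integral_const_mul]
    exact (reCLM.intervalIntegral_comp_comm
      ((by fun_prop : Continuous fun x => conj t * (u x * conj (v x))).intervalIntegrable _ _)).symm
  simp_rw [hpt]
  rw [hre, intervalIntegral.integral_add, intervalIntegral.integral_sub,
    intervalIntegral.integral_const_mul, intervalIntegral.integral_const_mul]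
  all_goals exact Continuous.intervalIntegrable (by fun_prop) _ _

theorem integral_mul_conj_eq_zero_of_forall_le {u v : ℝ → ℂ} {α β : ℝ}
    (hu : Continuous u) (hv : Continuous v)
    (h : ∀ t : ℂ, ∫ x in α..β, ‖u x‖ ^ 2 ≤ ∫ x in α..β, ‖u x - t * v x‖ ^ 2) :
    ∫ x in α..β, u x * conj (v x) = 0 :=
  eq_zero_of_forall_two_mul_re_le fun t => by
    have := h t
    rw [integral_norm_sub_mul_sq hu hv] at this
    linarith

theorem eval_derivative_X_sub_C_mul {R : Type*} [CommRing R] (x : R) (r : R[X]) :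
    (derivative ((X - C x) * r)).eval x = r.eval x := by
  simp [derivative_mul]

theorem eval_derivative_derivative_X_sub_C_mul {R : Type*} [CommRing R] (x : R) (r : R[X]) :
    (derivative (derivative ((X - C x) * r))).eval x = 2 * (derivative r).eval x := by
  simp [derivative_mul]
  ring

theorem eval_derivative_C_mul_prod_X_sub_C {K ι : Type*} [Field K] [DecidableEq ι] {s : Finset ι}
    {v : ι → K} {x : K} (c : K) (hx : ∀ j ∈ s, x ≠ v j) :
    (derivative (C c * ∏ j ∈ s, (X - C (v j)))).eval x
      = (C c * ∏ j ∈ s, (X - C (v j))).eval x * ∑ j ∈ s, 1 / (x - v j) := by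
  simp only [derivative_C_mul, derivative_prod_finset, derivative_sub, derivative_X,
    derivative_C, sub_zero, mul_one, eval_mul, eval_C, eval_prod, eval_finsetSum, eval_sub,
    eval_X, Finset.mul_sum, mul_assoc]
  refine Finset.sum_congr rfl fun j hj => ?_
  rw [← Finset.mul_prod_erase s _ hj]
  field_simp [sub_ne_zero.mpr (hx j hj)]

theorem natDegree_mul_iterate_derivative_le {R : Type*} [Semiring R] {q p : R[X]} {k : ℕ}
    (hq : q.natDegree ≤ k) : (q * derivative^[k] p).natDegree ≤ p.natDegree := by
  rcases lt_or_ge p.natDegree k with hlt | hle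
  · simp [iterate_derivative_eq_zero hlt]
  · have := natDegree_iterate_derivative p k
    exact natDegree_mul_le.trans (by omega)

theorem circleMap_zero_one_eq_cos_add_sin_mul_I (θ : ℝ) :
    circleMap 0 1 θ = Real.cos θ + Real.sin θ * I := by
  rw [circleMap_zero, ofReal_one, one_mul, exp_mul_I, ← ofReal_cos, ← ofReal_sin]

theorem conj_circleMap_zero_one (θ : ℝ) : conj (circleMap 0 1 θ) = (circleMap 0 1 θ)⁻¹ := by
  rw [conj_circleMap_zero, circleMap_zero_inv, inv_one]

theorem conj_circleMap_zero_one_pow (θ : ℝ) (j : ℕ) :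
    conj (circleMap 0 1 θ ^ j) = circleMap 0 1 θ ^ (-(j : ℤ)) := by
  rw [map_pow, conj_circleMap_zero_one, zpow_neg, zpow_natCast, inv_pow]

theorem conj_eval_circleMap {T : ℂ[X]} {n : ℕ} (hdeg : T.natDegree < n) (θ : ℝ) :
    conj (T.eval (circleMap 0 1 θ)) =
      ∑ j ∈ Finset.range n, conj (T.coeff j) * circleMap 0 1 θ ^ (-(j : ℤ)) := by
  simp_rw [T.eval_eq_sum_range' hdeg, map_sum, map_mul, conj_circleMap_zero_one_pow]

theorem exists_eval_circleMap_ne_zero {T : ℂ[X]} (hT : T ≠ 0) :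
    ∃ θ ∈ Ioo 0 (2 * π), T.eval (circleMap 0 1 θ) ≠ 0 := by
  by_contra! h
  refine hT (eq_zero_of_infinite_isRoot T (Infinite.mono ?_ ((Ioo_infinite Real.two_pi_pos).image
    ((injOn_circleMap_of_abs_sub_le' (c := 0) one_ne_zero (by simp)).mono Ioo_subset_Ico_self))))
  rintro _ ⟨θ, hθ, rfl⟩
  exact h θ hθ

theorem continuous_circleMap_zpow (m : ℤ) : Continuous fun θ => circleMap 0 1 θ ^ m :=
  (continuous_circleMap 0 1).zpow₀ m fun _ => Or.inl (circleMap_ne_center one_ne_zero)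

variable {a : ℝ}

theorem continuousOn_one_sub_cpow (ha : 0 < a) :
    ContinuousOn (fun z : ℂ => (1 - z) ^ (a : ℂ)) (closedBall 0 1) := fun z hz =>
  have hre : 0 ≤ (1 - z).re := by
    rw [sub_re, one_re, sub_nonneg]
    exact (re_le_norm z).trans (mem_closedBall_zero_iff.mp hz)
  ((continuousAt_cpow_const_of_re_pos (Or.inl hre) (by simpa using ha)).comp
    (continuous_sub_left 1).continuousAt).continuousWithinAt

theorem continuous_one_sub_circleMap_cpow (ha : 0 < a) :
    Continuous fun θ => (1 - circleMap 0 1 θ) ^ (a : ℂ) :=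
  (continuousOn_one_sub_cpow ha).comp_continuous (continuous_circleMap 0 1)
    (circleMap_mem_closedBall 0 zero_le_one)

theorem integral_circleMap_pow_mul_one_sub_cpow (ha : 0 < a) (j : ℕ) :
    ∫ θ in 0..2 * π, circleMap 0 1 θ ^ (j + 1) * (1 - circleMap 0 1 θ) ^ (a : ℂ) = 0 := by
  have hd : ∀ z ∈ ball (0 : ℂ) 1 \ ∅,
      DifferentiableAt ℂ (fun z => z ^ j * (1 - z) ^ (a : ℂ)) z := by
    intro z hz
    have hre : 0 < (1 - z).re := by
      rw [sub_re, one_re, sub_pos]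
      exact (re_le_norm z).trans_lt (mem_ball_zero_iff.mp hz.1)
    exact (differentiableAt_pow j).mul
      ((differentiableAt_const 1).sub differentiableAt_id |>.cpow_const (Or.inl hre))
  have hcauchy := circleIntegral_eq_zero_of_differentiable_on_off_countable
    (f := fun z => z ^ j * (1 - z) ^ (a : ℂ)) zero_le_one countable_empty
    ((continuousOn_pow j).mul (continuousOn_one_sub_cpow ha)) hd
  simp only [circleIntegral, deriv_circleMap, smul_eq_mul] at hcauchy
  have hI : ∀ θ, circleMap 0 1 θ * I * (circleMap 0 1 θ ^ j * (1 - circleMap 0 1 θ) ^ (a : ℂ)) =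
      I * (circleMap 0 1 θ ^ (j + 1) * (1 - circleMap 0 1 θ) ^ (a : ℂ)) := fun θ => by ring
  simp_rw [hI, intervalIntegral.integral_const_mul] at hcauchy
  exact (mul_eq_zero.mp hcauchy).resolve_left I_ne_zero

def circleWeight (a θ : ℝ) : ℝ := (2 - 2 * Real.cos θ) ^ a

theorem norm_one_sub_circleMap_sq (θ : ℝ) : ‖1 - circleMap 0 1 θ‖ ^ 2 = 2 - 2 * Real.cos θ := by
  rw [← normSq_eq_norm_sq, normSq_apply, circleMap_zero_one_eq_cos_add_sin_mul_I]
  simp only [sub_re, one_re, add_re, ofReal_re, mul_re, I_re, ofReal_im, I_im, sub_im, one_im,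
    add_im, mul_im]
  nlinarith [Real.sin_sq_add_cos_sq θ]

theorem norm_one_sub_circleMap_cpow_sq (θ : ℝ) :
    ‖(1 - circleMap 0 1 θ) ^ (a : ℂ)‖ ^ 2 = circleWeight a θ := by
  rw [norm_cpow_real, Real.rpow_pow_comm (norm_nonneg _), norm_one_sub_circleMap_sq,
    circleWeight]

theorem two_sub_two_mul_cos_nonneg (θ : ℝ) : 0 ≤ 2 - 2 * Real.cos θ := by
  linarith [Real.cos_le_one θ]

theorem two_sub_two_mul_cos_pos {θ : ℝ} (hθ : θ ∈ Ioo 0 (2 * π)) : 0 < 2 - 2 * Real.cos θ := by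
  have hne : Real.cos θ ≠ 1 := fun h =>
    hθ.1.ne' ((Real.cos_eq_one_iff_of_lt_of_lt (by linarith [hθ.1, Real.pi_pos]) hθ.2).mp h)
  linarith [lt_of_le_of_ne (Real.cos_le_one θ) hne]

theorem circleWeight_nonneg (a θ : ℝ) : 0 ≤ circleWeight a θ :=
  Real.rpow_nonneg (two_sub_two_mul_cos_nonneg θ) a

theorem circleWeight_pos {θ : ℝ} (hθ : θ ∈ Ioo 0 (2 * π)) : 0 < circleWeight a θ :=
  Real.rpow_pos_of_pos (two_sub_two_mul_cos_pos hθ) a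

theorem continuous_circleWeight (ha : 0 ≤ a) : Continuous (circleWeight a) :=
  (continuous_const.sub (continuous_const.mul Real.continuous_cos)).rpow_const fun _ => Or.inr ha

theorem hasDerivAt_circleMap_sub_one_mul_circleWeight {θ : ℝ} (hθ : θ ∈ Ioo 0 (2 * π)) :
    HasDerivAt (fun θ => (circleMap 0 1 θ - 1) * circleWeight a θ)
      (I * ((a + 1) * circleMap 0 1 θ + a) * circleWeight a θ) θ := by
  have hx := two_sub_two_mul_cos_pos hθ
  have hW : HasDerivAt (circleWeight a)
      (-(2 * -Real.sin θ) * a * (2 - 2 * Real.cos θ) ^ (a - 1)) θ :=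
    (((Real.hasDerivAt_cos θ).const_mul 2).const_sub 2).rpow_const (Or.inl hx.ne')
  refine (((hasDerivAt_circleMap 0 1 θ).sub_const 1).mul hW.ofReal_comp).congr_deriv ?_
  have hsc : (Real.sin θ : ℂ) ^ 2 + (Real.cos θ : ℂ) ^ 2 = 1 := by
    exact_mod_cast Real.sin_sq_add_cos_sq θ
  rw [Real.rpow_sub_one hx.ne', circleWeight, circleMap_zero_one_eq_cos_add_sin_mul_I]
  generalize (2 - 2 * Real.cos θ) ^ a = R
  generalize Real.cos θ = c at hx hsc ⊢
  generalize Real.sin θ = s at hsc ⊢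
  have hx' : (1 - c : ℂ) ≠ 0 := by exact_mod_cast (by linarith : 1 - c ≠ 0)
  push_cast
  field_simp
  linear_combination (R * I * a) * hsc + (R * s * a * (c - 1)) * I_sq

def circleMoment (a : ℝ) (h : ℂ[X]) (m : ℤ) : ℂ :=
  ∫ θ in 0..2 * π, circleMap 0 1 θ ^ m * h.eval (circleMap 0 1 θ) * circleWeight a θ

theorem continuous_circleMoment_integrand (ha : 0 ≤ a) (h : ℂ[X]) (m : ℤ) :
    Continuous fun θ => circleMap 0 1 θ ^ m * h.eval (circleMap 0 1 θ) * circleWeight a θ :=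
  ((continuous_circleMap_zpow m).mul (h.continuous.comp (continuous_circleMap 0 1))).mul
    (continuous_ofReal.comp (continuous_circleWeight ha))

theorem circleMoment_add (ha : 0 ≤ a) (h g : ℂ[X]) (m : ℤ) :
    circleMoment a (h + g) m = circleMoment a h m + circleMoment a g m := by
  simp only [circleMoment, eval_add, mul_add, add_mul]
  exact intervalIntegral.integral_add
    ((continuous_circleMoment_integrand ha h m).intervalIntegrable _ _)
    ((continuous_circleMoment_integrand ha g m).intervalIntegrable _ _)

theorem circleMoment_sub (ha : 0 ≤ a) (h g : ℂ[X]) (m : ℤ) :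
    circleMoment a (h - g) m = circleMoment a h m - circleMoment a g m := by
  simp only [circleMoment, eval_sub, mul_sub, sub_mul]
  exact intervalIntegral.integral_sub
    ((continuous_circleMoment_integrand ha h m).intervalIntegrable _ _)
    ((continuous_circleMoment_integrand ha g m).intervalIntegrable _ _)

theorem circleMoment_C_mul (h : ℂ[X]) (c : ℂ) (m : ℤ) :
    circleMoment a (C c * h) m = c * circleMoment a h m := by
  rw [circleMoment, circleMoment, ← intervalIntegral.integral_const_mul]
  simp only [eval_mul, eval_C]
  congr 1 with θ
  ring

theorem circleMoment_X_mul (h : ℂ[X]) (m : ℤ) :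
    circleMoment a (X * h) m = circleMoment a h (m + 1) := by
  simp only [circleMoment, eval_mul, eval_X, zpow_add_one₀ (circleMap_ne_center one_ne_zero)]
  congr 1 with θ
  ring

theorem circleMoment_recurrence (ha : 0 ≤ a) (h : ℂ[X]) (m : ℤ) :
    circleMoment a
      (X * (X - 1) * derivative h + (C ((a : ℂ) + 1 + m) * X + C ((a : ℂ) - m)) * h) m = 0 := by
  have hz : ∀ θ, circleMap 0 1 θ ≠ 0 := fun θ => circleMap_ne_center one_ne_zero
  have hderiv : ∀ θ ∈ Ioo 0 (2 * π), HasDerivAt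
      (fun θ => circleMap 0 1 θ ^ m * h.eval (circleMap 0 1 θ) *
        ((circleMap 0 1 θ - 1) * circleWeight a θ))
      (I * (circleMap 0 1 θ ^ m * (X * (X - 1) * derivative h
        + (C ((a : ℂ) + 1 + m) * X + C ((a : ℂ) - m)) * h).eval (circleMap 0 1 θ) *
          circleWeight a θ)) θ := by
    intro θ hθ
    have hzpow := (hasDerivAt_zpow m _ (Or.inl (hz θ))).comp θ (hasDerivAt_circleMap 0 1 θ)
    have hh := (h.hasDerivAt _).comp θ (hasDerivAt_circleMap 0 1 θ)
    refine ((hzpow.mul hh).mul (hasDerivAt_circleMap_sub_one_mul_circleWeight hθ)).congr_deriv ?_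
    simp only [Function.comp_apply, Pi.mul_apply, eval_add, eval_mul, eval_sub, eval_X, eval_C,
      eval_one, zpow_sub_one₀ (hz θ)]
    field_simp
    ring
  have hcont : Continuous fun θ => circleMap 0 1 θ ^ m * h.eval (circleMap 0 1 θ) *
      ((circleMap 0 1 θ - 1) * circleWeight a θ) :=
    ((continuous_circleMap_zpow m).mul (h.continuous.comp (continuous_circleMap 0 1))).mul
      (((continuous_circleMap 0 1).sub continuous_const).mul
        (continuous_ofReal.comp (continuous_circleWeight ha)))
  have hFTC := intervalIntegral.integral_eq_sub_of_hasDerivAt_of_le Real.two_pi_pos.le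
    hcont.continuousOn hderiv
    ((continuous_const.mul (continuous_circleMoment_integrand ha _ m)).intervalIntegrable _ _)
  rw [intervalIntegral.integral_const_mul] at hFTC
  exact (mul_eq_zero.mp (hFTC.trans (by simp [circleMap]))).resolve_left I_ne_zero

theorem integral_norm_eval_sq_mul_circleWeight_pos (ha : 0 ≤ a) {T : ℂ[X]} (hT : T ≠ 0) :
    0 < ∫ θ in 0..2 * π, ‖T.eval (circleMap 0 1 θ)‖ ^ 2 * circleWeight a θ := by
  obtain ⟨θ₀, hθ₀, hTθ₀⟩ := exists_eval_circleMap_ne_zero hT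
  have hcont : Continuous fun θ => ‖T.eval (circleMap 0 1 θ)‖ ^ 2 * circleWeight a θ :=
    ((T.continuous.comp (continuous_circleMap 0 1)).norm.pow 2).mul (continuous_circleWeight ha)
  exact intervalIntegral.integral_pos Real.two_pi_pos hcont.continuousOn
    (fun θ _ => mul_nonneg (sq_nonneg _) (circleWeight_nonneg a θ))
    ⟨θ₀, Ioo_subset_Icc_self hθ₀, mul_pos (by positivity) (circleWeight_pos hθ₀)⟩

theorem eq_zero_of_circleMoment_neg_eq_zero (ha : 0 ≤ a) {n : ℕ} {T : ℂ[X]}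
    (hdeg : T.natDegree ≤ n) (hmom : ∀ j ≤ n, circleMoment a T (-j) = 0) : T = 0 := by
  by_contra hT
  have hsum : ∀ θ, ((‖T.eval (circleMap 0 1 θ)‖ ^ 2 * circleWeight a θ : ℝ) : ℂ) =
      ∑ j ∈ Finset.range (n + 1), conj (T.coeff j) *
        (circleMap 0 1 θ ^ (-(j : ℤ)) * T.eval (circleMap 0 1 θ) * circleWeight a θ) := by
    intro θ
    rw [ofReal_mul, ofReal_pow, ← mul_conj', conj_eval_circleMap (Nat.lt_succ_of_le hdeg),
      Finset.mul_sum, Finset.sum_mul]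
    exact Finset.sum_congr rfl fun j _ => by ring
  have hzero : ((∫ θ in 0..2 * π, ‖T.eval (circleMap 0 1 θ)‖ ^ 2 * circleWeight a θ : ℝ) : ℂ)
      = 0 := by
    rw [← intervalIntegral.integral_ofReal, funext hsum, intervalIntegral.integral_finsetSum
      (f := fun j θ => conj (T.coeff j) *
        (circleMap 0 1 θ ^ (-(j : ℤ)) * T.eval (circleMap 0 1 θ) * circleWeight a θ))
      fun j _ =>
        (continuous_const.mul (continuous_circleMoment_integrand ha T _)).intervalIntegrable _ _]
    refine Finset.sum_eq_zero fun j hj => ?_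
    rw [intervalIntegral.integral_const_mul]
    exact mul_eq_zero_of_right _ (hmom j (Nat.lt_succ_iff.mp (Finset.mem_range.mp hj)))
  exact (integral_norm_eval_sq_mul_circleWeight_pos ha hT).ne' (ofReal_eq_zero.mp hzero)

theorem energyPow_eq_integral_circleMap (a : ℝ) (q : ℂ[X]) : energyPow a q =
    ∫ θ in 0..2 * π, ‖1 - q.eval (circleMap 0 1 θ) * (1 - circleMap 0 1 θ) ^ (a : ℂ)‖ ^ 2 := by
  simp [energyPow, circleMap_zero]

theorem IsOPAPow.circleMoment_eq_zero (ha : 0 < a) {n : ℕ} {p : ℂ[X]} (hp : IsOPAPow a n p)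
    {j : ℕ} (hj₀ : 0 < j) (hjn : j ≤ n) : circleMoment a p (-j) = 0 := by
  set f : ℝ → ℂ := fun θ => (1 - circleMap 0 1 θ) ^ (a : ℂ)
  have hf : Continuous f := continuous_one_sub_circleMap_cpow ha
  have hz : Continuous (circleMap 0 1) := continuous_circleMap 0 1
  have horth := integral_mul_conj_eq_zero_of_forall_le (α := 0) (β := 2 * π)
    (u := fun θ => 1 - p.eval (circleMap 0 1 θ) * f θ) (v := fun θ => circleMap 0 1 θ ^ j * f θ)
    (continuous_const.sub ((p.continuous.comp hz).mul hf)) ((hz.pow j).mul hf) fun t => by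
      have hdeg : (p + C t * X ^ j).degree ≤ (n : WithBot ℕ) :=
        (degree_add_le _ _).trans
          (max_le hp.1 ((degree_C_mul_X_pow_le j t).trans (by exact_mod_cast hjn)))
      calc _ = energyPow a p := (energyPow_eq_integral_circleMap a p).symm
        _ ≤ energyPow a (p + C t * X ^ j) := hp.2 _ hdeg
        _ = _ := by
          rw [energyPow_eq_integral_circleMap]
          congr 1 with θ
          simp only [eval_add, eval_mul, eval_C, eval_pow, eval_X, f]
          ring_nf
  have hsplit : ∀ θ, (1 - p.eval (circleMap 0 1 θ) * f θ) * conj (circleMap 0 1 θ ^ j * f θ) =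
      conj (circleMap 0 1 θ ^ j * f θ) -
        circleMap 0 1 θ ^ (-(j : ℤ)) * p.eval (circleMap 0 1 θ) * circleWeight a θ := by
    intro θ
    rw [← norm_one_sub_circleMap_cpow_sq, ofReal_pow, ← mul_conj', map_mul,
      conj_circleMap_zero_one_pow]
    ring
  obtain ⟨i, rfl⟩ : ∃ i, j = i + 1 := ⟨j - 1, by omega⟩
  rw [funext hsplit, intervalIntegral.integral_sub
    (Continuous.intervalIntegrable (by fun_prop) _ _)
    ((continuous_circleMoment_integrand ha.le p _).intervalIntegrable _ _),
    intervalIntegral.intervalIntegral_conj, integral_circleMap_pow_mul_one_sub_cpow ha i, map_zero,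
    zero_sub, neg_eq_zero] at horth
  exact horth

def opaOperator (a : ℝ) (n : ℕ) (p : ℂ[X]) : ℂ[X] :=
  X * (X - 1) * derivative (derivative p)
    + (C ((a : ℂ) + 1 - n) * X + C ((n : ℂ) + a)) * derivative p - C ((n : ℂ) * a) * p

theorem circleMoment_opaOperator (ha : 0 ≤ a) (n : ℕ) (p : ℂ[X]) (m : ℤ) :
    circleMoment a (opaOperator a n p) m
      = m * (n + a + m) * circleMoment a p m
        + (n + m) * (a + 1 - m) * circleMoment a p (m - 1) := by
  have hR₁ := circleMoment_recurrence ha (derivative p) m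
  have hR₀ := circleMoment_recurrence ha p (m - 1)
  set R₁ := X * (X - 1) * derivative (derivative p)
    + (C ((a : ℂ) + 1 + m) * X + C ((a : ℂ) - m)) * derivative p
  set R₀ := X * (X - 1) * derivative p
    + (C ((a : ℂ) + 1 + (m - 1 : ℤ)) * X + C ((a : ℂ) - (m - 1 : ℤ))) * p
  have key : X * opaOperator a n p = X * R₁ - C ((n : ℂ) + m) * R₀
      + (C (m * ((n : ℂ) + a + m)) * (X * p) + C (((n : ℂ) + m) * (a + 1 - m)) * p) := by
    simp only [R₁, R₀, opaOperator, map_add, map_sub, map_mul, map_one, map_natCast, map_intCast,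
      Int.cast_sub, Int.cast_one]
    ring
  have hshift := circleMoment_X_mul (a := a) (opaOperator a n p) (m - 1)
  rw [sub_add_cancel] at hshift
  rw [← hshift, key, circleMoment_add ha, circleMoment_sub ha, circleMoment_add ha,
    circleMoment_X_mul, sub_add_cancel, circleMoment_C_mul, circleMoment_C_mul, circleMoment_C_mul,
    circleMoment_X_mul, sub_add_cancel, hR₁, hR₀]
  ring

theorem natDegree_opaOperator_le {n : ℕ} {p : ℂ[X]} (hp : p.natDegree ≤ n) :
    (opaOperator a n p).natDegree ≤ n := by
  have h₂ := natDegree_mul_iterate_derivative_le (k := 2) (p := p) (q := X * (X - 1))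
    (by compute_degree)
  have h₁ := natDegree_mul_iterate_derivative_le (k := 1) (p := p)
    (q := C ((a : ℂ) + 1 - n) * X + C ((n : ℂ) + a)) (by compute_degree)
  have h₀ := natDegree_mul_iterate_derivative_le (k := 0) (p := p) (q := C ((n : ℂ) * a))
    (natDegree_C _).le
  exact (natDegree_sub_le_of_le (natDegree_add_le_of_degree_le h₂ h₁) h₀).trans (by simpa)

theorem IsOPAPow.opaOperator_eq_zero (ha : 0 < a) {n : ℕ} {p : ℂ[X]} (hp : IsOPAPow a n p) :
    opaOperator a n p = 0 := by
  refine eq_zero_of_circleMoment_neg_eq_zero ha.le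
    (natDegree_opaOperator_le (natDegree_le_iff_degree_le.mpr hp.1)) fun j hj => ?_
  have hmom : ∀ i, 0 < i → i ≤ n → circleMoment a p (-i) = 0 := fun _ => hp.circleMoment_eq_zero ha
  -- the factor `m` kills the first term at `j = 0`, the factor `n + m` the second at `j = n`
  rw [circleMoment_opaOperator ha.le]
  rcases j.eq_zero_or_pos with rfl | hj₀
  · rcases n.eq_zero_or_pos with rfl | hn
    · simp
    · simp [show (-1 : ℤ) = -((1 : ℕ) : ℤ) by simp, hmom 1 one_pos hn]
  rcases hj.lt_or_eq with hjn | rfl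
  · have : -(j : ℤ) - 1 = -((j + 1 : ℕ) : ℤ) := by push_cast; ring
    rw [hmom j hj₀ hj, this, hmom (j + 1) j.succ_pos hjn]
    ring
  · rw [hmom j hj₀ le_rfl]
    push_cast
    ring

end

theorem opa_zeros_equilibrium_one_singularity_general
    (a : ℝ) (ha : 0 < a) (n : ℕ)
    (p : Polynomial ℂ) (hp : IsOPAPow a n p)
    (c : ℂ) (hc : c ≠ 0)
    (w : Fin n → ℂ) (hwinj : Function.Injective w)
    (hroots : p = Polynomial.C c * ∏ j, (Polynomial.X - Polynomial.C (w j)))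
    (hw0 : ∀ k, w k ≠ 0) (hw1 : ∀ k, w k ≠ 1) :
    ∀ k, (∑ j ∈ Finset.univ.erase k, 1 / (w k - w j)) +
      ((a : ℂ) + 1 / 2) / (w k - 1) -
      (((n : ℂ) + (a : ℂ)) / 2) / w k = 0 := by
  intro k
  set r := C c * ∏ j ∈ Finset.univ.erase k, (X - C (w j))
  have hfac : p = (X - C (w k)) * r := by
    rw [hroots, ← Finset.mul_prod_erase Finset.univ _ (Finset.mem_univ k)]
    ring
  have hne : ∀ j ∈ Finset.univ.erase k, w k ≠ w j := fun j hj h =>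
    Finset.ne_of_mem_erase hj (hwinj h).symm
  have hr : r.eval (w k) ≠ 0 := by
    simp only [r, eval_mul, eval_C, eval_prod, eval_sub, eval_X]
    exact mul_ne_zero hc (Finset.prod_ne_zero_iff.mpr fun j hj => sub_ne_zero.mpr (hne j hj))
  set S := ∑ j ∈ Finset.univ.erase k, 1 / (w k - w j)
  have hlog : (derivative r).eval (w k) = r.eval (w k) * S :=
    eval_derivative_C_mul_prod_X_sub_C c hne
  have hode := congrArg (eval (w k)) (hp.opaOperator_eq_zero ha)
  simp only [opaOperator, hfac, eval_sub, eval_add, eval_mul, eval_X, eval_C, eval_one, eval_zero,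
    eval_derivative_X_sub_C_mul, eval_derivative_derivative_X_sub_C_mul, hlog, sub_self,
    zero_mul, mul_zero, sub_zero] at hode
  have hS : 2 * w k * (w k - 1) * S + ((a + 1 - n) * w k + (n + a)) = 0 :=
    mul_left_cancel₀ hr (by linear_combination hode)
  field_simp [hw0 k, sub_ne_zero.mpr (hw1 k)]
  linear_combination hS

theorem opa_zeros_equilibrium_one_singularity
    (a : ℝ) (ha : 0 < a) (n : ℕ) (hn : 1 ≤ n)
    (p : Polynomial ℂ) (hp : IsOPAPow a n p)
    (c : ℂ) (hc : c ≠ 0)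
    (w : Fin n → ℂ) (hwinj : Function.Injective w)
    (hroots : p = Polynomial.C c * ∏ j, (Polynomial.X - Polynomial.C (w j)))
    (hw0 : ∀ k, w k ≠ 0) (hw1 : ∀ k, w k ≠ 1) :
    ∀ k, (∑ j ∈ Finset.univ.erase k, 1 / (w k - w j)) +
      ((a : ℂ) + 1 / 2) / (w k - 1) -
      (((n : ℂ) + (a : ℂ)) / 2) / w k = 0 :=
  opa_zeros_equilibrium_one_singularity_general a ha n p hp c hc w hwinj hroots hw0 hw1
end

section
/- Let d, n ∈ ℕ and let f ∈ ℂ[X] with deg f ≤ d and f(0) = 1. Let p_n be the degree-n OPA to 1/f, set u_m := (coeff of X^m in p_n · f · f*_d) for every m, and let φ_n := (p_n)*_n be the conjugate-reversal of p_n of order n. Then for every z ∈ ℂ with |z| > 1: ∮_{|t|=1} [φ_n(t) · f(t) · f*_d(t) · t^{−(n+d)}] / (t − z) dt = −2πi · ∑_{j=1}^{d} conj(u_{n+d+j}) · z^{−n−j}, where the contour integral is over the positively oriented unit circle. -/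
open Polynomial Complex

/-- The squared H² norm of a polynomial: `‖g‖² = ∑ₖ |gₖ|²`. -/
noncomputable def hnormSq (g : Polynomial ℂ) : ℝ :=
  ∑ᶠ k : ℕ, ‖g.coeff k‖ ^ 2

/-- `p` is the degree-`n` optimal polynomial approximant (OPA) to `1/f` in H². -/
def IsOPA (f : Polynomial ℂ) (n : ℕ) (p : Polynomial ℂ) : Prop :=
  p.degree ≤ (n : ℕ) ∧
    ∀ q : Polynomial ℂ, q.degree ≤ (n : ℕ) → hnormSq (1 - p * f) ≤ hnormSq (1 - q * f)

/-- Conjugate-reversal of order `N`: `q*_N(X) = ∑_{j=0}^N conj(q_{N-j}) Xʲ`. -/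
noncomputable def cRev (N : ℕ) (q : Polynomial ℂ) : Polynomial ℂ :=
  ∑ j ∈ Finset.range (N + 1), Polynomial.C ((starRingEnd ℂ) (q.coeff (N - j))) * Polynomial.X ^ j

/-!
Since `(A * q*_N).coeff N = ∑_{i ≤ N} Aᵢ conj qᵢ`, pairings in H² become coefficients of
products with conjugate-reversals. Optimality of `p` makes `1 - p f` orthogonal to `X^k f` for
`k ≤ n`, and `1` is orthogonal to `X^k f` for `k ≥ 1`; hence `g = p f f*_d` has vanishing
coefficients of index `d + 1, …, d + n`. The numerator `φ f f*_d` is `g*_{n+2d}`, so the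
integrand is a Laurent polynomial over `t - z`, and for `|z| > 1` one has
`∮ tᵏ / (t - z) = -2πi zᵏ` for `k < 0` and `0` for `k ≥ 0`. Of the negative powers, those coming
from the vanishing coefficients of `g` drop out and the `d` remaining ones give the formula.
-/

open ComplexConjugate

theorem coeff_cRev (N : ℕ) (q : ℂ[X]) (j : ℕ) :
    (cRev N q).coeff j = if j ≤ N then conj (q.coeff (N - j)) else 0 := by
  simp only [cRev, finsetSum_coeff, coeff_C_mul_X_pow, Finset.sum_ite_eq,
    Finset.mem_range_succ_iff]

theorem natDegree_cRev_le (N : ℕ) (q : ℂ[X]) : (cRev N q).natDegree ≤ N :=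
  natDegree_le_iff_coeff_eq_zero.2 fun j hj => by rw [coeff_cRev, if_neg hj.not_ge]

theorem cRev_eq_reflect_map {N : ℕ} {q : ℂ[X]} (hq : q.natDegree ≤ N) :
    cRev N q = reflect N (q.map (starRingEnd ℂ)) := by
  ext j
  rw [coeff_cRev, coeff_reflect, coeff_map]
  split_ifs with hj
  · rw [revAt_le hj]
  · rw [revAt_eq_self_of_lt (not_le.1 hj), coeff_eq_zero_of_natDegree_lt (by omega), map_zero]

theorem cRev_cRev {N : ℕ} {q : ℂ[X]} (hq : q.natDegree ≤ N) : cRev N (cRev N q) = q := by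
  rw [cRev_eq_reflect_map (natDegree_cRev_le N q), cRev_eq_reflect_map hq, reflect_map]
  ext j
  simp [coeff_map]

theorem cRev_mul {M N : ℕ} {A B : ℂ[X]} (hA : A.natDegree ≤ M) (hB : B.natDegree ≤ N) :
    cRev (M + N) (A * B) = cRev M A * cRev N B := by
  rw [cRev_eq_reflect_map (natDegree_mul_le.trans (add_le_add hA hB)), cRev_eq_reflect_map hA,
    cRev_eq_reflect_map hB, Polynomial.map_mul,
    reflect_mul _ _ (natDegree_map_le.trans hA) (natDegree_map_le.trans hB)]

theorem cRev_add_X_pow_mul (N k : ℕ) (q : ℂ[X]) : cRev (N + k) (X ^ k * q) = cRev N q := by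
  ext j
  simp only [coeff_cRev, coeff_X_pow_mul']
  split_ifs <;> first | rfl | omega | (congr 2; omega) | exact map_zero _

theorem cRev_add {N : ℕ} {q : ℂ[X]} (hq : q.natDegree ≤ N) (m : ℕ) :
    cRev (N + m) q = X ^ m * cRev N q := by
  ext j
  simp only [coeff_cRev, coeff_X_pow_mul']
  split_ifs <;> first | rfl | omega | (congr 2; omega) |
    rw [coeff_eq_zero_of_natDegree_lt (by omega), map_zero]

theorem coeff_mul_cRev (A B : ℂ[X]) (N : ℕ) :
    (A * cRev N B).coeff N = ∑ i ∈ Finset.range (N + 1), A.coeff i * conj (B.coeff i) := by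
  rw [coeff_mul,
    Finset.Nat.sum_antidiagonal_eq_sum_range_succ fun i j => A.coeff i * (cRev N B).coeff j]
  refine Finset.sum_congr rfl fun i hi => ?_
  rw [coeff_cRev, if_pos (Nat.sub_le N i), Nat.sub_sub_self (Finset.mem_range_succ_iff.1 hi)]

theorem inner_eq_zero_of_forall_norm_le_norm_sub_smul {𝕜 E : Type*} [RCLike 𝕜]
    [NormedAddCommGroup E] [InnerProductSpace 𝕜 E] {x y : E}
    (h : ∀ c : 𝕜, ‖x‖ ≤ ‖x - c • y‖) : inner 𝕜 y x = 0 := by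
  have hmin : ‖x - 0‖ = ⨅ w : 𝕜 ∙ y, ‖x - w‖ := by
    refine le_antisymm (le_ciInf fun ⟨w, hw⟩ => ?_)
      (ciInf_le ⟨0, ?_⟩ (⟨0, zero_mem _⟩ : 𝕜 ∙ y))
    · obtain ⟨c, rfl⟩ := Submodule.mem_span_singleton.1 hw
      simpa using h c
    · rintro _ ⟨w, rfl⟩
      positivity
  rw [inner_eq_zero_symm]
  simpa using (Submodule.norm_eq_iInf_iff_inner_eq_zero _ (zero_mem _)).1 hmin y
    (Submodule.mem_span_singleton_self y)

noncomputable def coeffVec (M : ℕ) : ℂ[X] →ₗ[ℂ] EuclideanSpace ℂ (Fin M) where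
  toFun g := WithLp.toLp 2 fun i => g.coeff i
  map_add' _ _ := by ext; simp
  map_smul' _ _ := by ext; simp

theorem inner_coeffVec (M : ℕ) (A B : ℂ[X]) :
    inner ℂ (coeffVec M A) (coeffVec M B) =
      ∑ i ∈ Finset.range M, B.coeff i * conj (A.coeff i) := by
  simp only [coeffVec, LinearMap.coe_mk, AddHom.coe_mk, PiLp.inner_apply, RCLike.inner_apply]
  exact Fin.sum_univ_eq_sum_range (fun i => B.coeff i * conj (A.coeff i)) M

theorem hnormSq_eq_sum_range {g : ℂ[X]} {M : ℕ} (hg : g.natDegree < M) :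
    hnormSq g = ∑ k ∈ Finset.range M, ‖g.coeff k‖ ^ 2 := by
  refine finsum_eq_sum_of_support_subset _ fun k hk => ?_
  by_contra hkM
  simp only [Finset.coe_range, Set.mem_Iio, not_lt] at hkM
  exact hk (by simp [coeff_eq_zero_of_natDegree_lt (hg.trans_le hkM)])

theorem norm_coeffVec_sq {g : ℂ[X]} {M : ℕ} (hg : g.natDegree < M) :
    ‖coeffVec M g‖ ^ 2 = hnormSq g := by
  rw [EuclideanSpace.norm_sq_eq, hnormSq_eq_sum_range hg]
  exact Fin.sum_univ_eq_sum_range (fun i => ‖g.coeff i‖ ^ 2) M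

theorem natDegree_one_sub_mul_le {q f : ℂ[X]} {n : ℕ} (hq : q.degree ≤ n) :
    (1 - q * f).natDegree ≤ n + f.natDegree :=
  (natDegree_sub_le _ _).trans <| max_le (by simp) <|
    natDegree_mul_le.trans (add_le_add_left (natDegree_le_iff_degree_le.2 hq) _)

theorem IsOPA.coeff_one_sub_mul_mul_cRev_eq_zero {f p q : ℂ[X]} {n N : ℕ} (hp : IsOPA f n p)
    (hq : q.degree ≤ n) (hN : n + f.natDegree ≤ N) :
    ((1 - p * f) * cRev N (q * f)).coeff N = 0 := by
  have hdeg {r : ℂ[X]} (hr : r.degree ≤ n) : (1 - r * f).natDegree < N + 1 :=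
    (natDegree_one_sub_mul_le hr).trans_lt (by omega)
  rw [coeff_mul_cRev, ← inner_coeffVec]
  refine inner_eq_zero_of_forall_norm_le_norm_sub_smul fun c => ?_
  have hpq : (p + c • q).degree ≤ n := mem_degreeLE.1 <|
    Submodule.add_mem _ (mem_degreeLE.2 hp.1) (Submodule.smul_mem _ c (mem_degreeLE.2 hq))
  have hsub : 1 - p * f - c • (q * f) = 1 - (p + c • q) * f := by
    rw [add_mul, smul_mul_assoc]; abel
  rw [← map_smul, ← map_sub, hsub, ← sq_le_sq₀ (norm_nonneg _) (norm_nonneg _),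
    norm_coeffVec_sq (hdeg hp.1), norm_coeffVec_sq (hdeg hpq)]
  exact hp.2 _ hpq

theorem IsOPA.coeff_mul_mul_cRev_eq_zero {f p : ℂ[X]} {n d k : ℕ} (hp : IsOPA f n p)
    (hfd : f.natDegree ≤ d) (hk : 1 ≤ k) (hkn : k ≤ n) :
    (p * f * cRev d f).coeff (d + k) = 0 := by
  have hrev : cRev (n + d) (X ^ k * f) = X ^ (n - k) * cRev d f := by
    rw [show n + d = d + (n - k) + k by omega, cRev_add_X_pow_mul, cRev_add hfd]
  have horth := hp.coeff_one_sub_mul_mul_cRev_eq_zero (q := X ^ k) (N := n + d)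
    (by rw [degree_X_pow]; exact_mod_cast hkn) (by omega)
  -- `⟨1, X ^ k * f⟩ = 0` because `1 ≤ k`
  have hone : (X ^ (n - k) * cRev d f).coeff (n + d) = 0 := by
    rw [coeff_X_pow_mul', if_pos (by omega), coeff_cRev, if_neg (by omega)]
  have hpf : (p * f * (X ^ (n - k) * cRev d f)).coeff (n + d) =
      (p * f * cRev d f).coeff (d + k) := by
    rw [mul_left_comm, coeff_X_pow_mul', if_pos (by omega), show n + d - (n - k) = d + k by omega]
  rwa [hrev, sub_mul, one_mul, coeff_sub, hone, hpf, zero_sub, neg_eq_zero] at horth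

section CauchyIntegral

open Metric Real

variable {z : ℂ}

theorem circleIntegral_zpow_unit_circle (k : ℤ) :
    (∮ t in C(0, 1), t ^ k) = if k = -1 then 2 * π * I else 0 := by
  split_ifs with hk
  · subst hk
    simpa using circleIntegral.integral_sub_inv_of_mem_ball (c := 0) (w := 0) (R := 1) (by simp)
  · simpa using circleIntegral.integral_sub_zpow_of_ne hk 0 0 1

theorem sub_ne_zero_of_norm_le_one (hz : 1 < ‖z‖) {t : ℂ} (ht : ‖t‖ ≤ 1) :
    t - z ≠ 0 :=
  sub_ne_zero.2 fun htz => by rw [htz] at ht; linarith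

theorem circleIntegral_pow_div_sub (hz : 1 < ‖z‖) (m : ℕ) :
    (∮ t in C(0, 1), t ^ m / (t - z)) = 0 := by
  refine DiffContOnCl.circleIntegral_eq_zero zero_le_one <|
    DifferentiableOn.diffContOnCl_ball (U := closedBall 0 1) ?_ subset_rfl
  exact (differentiableOn_pow m).div (differentiableOn_id.sub_const z) fun t ht =>
    sub_ne_zero_of_norm_le_one hz (mem_closedBall_zero_iff.1 ht)

theorem continuousOn_zpow_unit_sphere (k : ℤ) :
    ContinuousOn (fun t : ℂ => t ^ k) (sphere 0 1) :=
  (continuousOn_zpow₀ k).mono fun t ht => ne_zero_of_mem_unit_sphere ⟨t, ht⟩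

theorem continuousOn_zpow_div_sub (hz : 1 < ‖z‖) (k : ℤ) :
    ContinuousOn (fun t => t ^ k / (t - z)) (sphere 0 1) :=
  (continuousOn_zpow_unit_sphere k).div (continuousOn_id.sub continuousOn_const) fun _ ht =>
    sub_ne_zero_of_norm_le_one hz (mem_sphere_zero_iff_norm.1 ht).le

theorem circleIntegral_zpow_sub_one_div_sub (hz : 1 < ‖z‖) (k : ℤ) :
    (∮ t in C(0, 1), t ^ (k - 1) / (t - z)) =
      z⁻¹ * ((∮ t in C(0, 1), t ^ k / (t - z)) - ∮ t in C(0, 1), t ^ (k - 1)) := by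
  have hz0 : z ≠ 0 := norm_pos_iff.1 (one_pos.trans hz)
  rw [← circleIntegral.integral_sub
    ((continuousOn_zpow_div_sub hz k).circleIntegrable zero_le_one)
    ((continuousOn_zpow_unit_sphere (k - 1)).circleIntegrable zero_le_one),
    ← circleIntegral.integral_const_mul]
  refine circleIntegral.integral_congr zero_le_one fun t ht => ?_
  have ht0 : t ≠ 0 := ne_zero_of_mem_unit_sphere ⟨t, ht⟩
  have htz : t - z ≠ 0 := sub_ne_zero_of_norm_le_one hz (mem_sphere_zero_iff_norm.1 ht).le
  rw [zpow_sub_one₀ ht0]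
  field_simp
  ring

theorem circleIntegral_zpow_div_sub (hz : 1 < ‖z‖) (k : ℤ) :
    (∮ t in C(0, 1), t ^ k / (t - z)) = if k < 0 then -(2 * π * I) * z ^ k else 0 := by
  obtain ⟨m, rfl | rfl⟩ := Int.eq_nat_or_neg k
  · rw [if_neg (by omega)]
    simpa using circleIntegral_pow_div_sub hz m
  induction m with
  | zero => simpa using circleIntegral_pow_div_sub hz 0
  | succ m ih =>
    have hz0 : z ≠ 0 := norm_pos_iff.1 (one_pos.trans hz)
    rw [Nat.cast_succ, neg_add, ← sub_eq_add_neg, circleIntegral_zpow_sub_one_div_sub hz, ih,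
      circleIntegral_zpow_unit_circle, zpow_sub_one₀ hz0]
    rcases m with _ | m
    · rw [if_neg (by omega), if_pos (by omega), if_pos (by omega), Nat.cast_zero, neg_zero,
        zpow_zero]
      ring
    · rw [if_pos (by omega), if_neg (by omega), if_pos (by omega)]
      ring

theorem circleIntegral_eval_mul_zpow_div_sub (hz : 1 < ‖z‖) (h : ℂ[X]) (N : ℕ) :
    (∮ t in C(0, 1), h.eval t * t ^ (-(N : ℤ)) / (t - z)) =
      -(2 * π * I) * ∑ m ∈ Finset.range N, h.coeff m * z ^ ((m : ℤ) - N) := by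
  induction h using Polynomial.induction_on' with
  | add p q hp hq =>
    have hint (r : ℂ[X]) :
        CircleIntegrable (fun t => r.eval t * t ^ (-(N : ℤ)) / (t - z)) 0 1 :=
      ((r.continuous.continuousOn.mul (continuousOn_zpow_unit_sphere _)).div
        (continuousOn_id.sub continuousOn_const) fun _ ht =>
          sub_ne_zero_of_norm_le_one hz (mem_sphere_zero_iff_norm.1 ht).le).circleIntegrable
        zero_le_one
    simp only [eval_add, add_mul, add_div, coeff_add, Finset.sum_add_distrib, mul_add]
    rw [circleIntegral.integral_add (hint p) (hint q), hp, hq]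
  | monomial m a =>
    have hmon : Set.EqOn (fun t => (monomial m a).eval t * t ^ (-(N : ℤ)) / (t - z))
        (fun t => a * (t ^ ((m : ℤ) - N) / (t - z))) (sphere 0 1) := fun t ht => by
      have ht0 : t ≠ 0 := ne_zero_of_mem_unit_sphere ⟨t, ht⟩
      simp only
      rw [eval_monomial, zpow_sub₀ ht0, zpow_neg, zpow_natCast, zpow_natCast]
      ring
    simp only [coeff_monomial, ite_mul, zero_mul, Finset.sum_ite_eq, Finset.mem_range]
    rw [circleIntegral.integral_congr zero_le_one hmon, circleIntegral.integral_const_mul,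
      circleIntegral_zpow_div_sub hz]
    split_ifs <;> first | omega | ring

end CauchyIntegral

theorem sum_range_coeff_cRev_mul_zpow {g : ℂ[X]} {n d : ℕ}
    (hg : ∀ k, 1 ≤ k → k ≤ n → g.coeff (d + k) = 0) (z : ℂ) :
    ∑ m ∈ Finset.range (n + d), (cRev (n + 2 * d) g).coeff m * z ^ ((m : ℤ) - (n + d : ℕ)) =
      ∑ j ∈ Finset.Icc 1 d, conj (g.coeff (n + d + j)) * z ^ (-(n : ℤ) - j) := by
  have hmiddle : ∑ m ∈ Finset.Ico d (n + d),
      (cRev (n + 2 * d) g).coeff m * z ^ ((m : ℤ) - (n + d : ℕ)) = 0 :=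
    Finset.sum_eq_zero fun m hm => by
      obtain ⟨hdm, hmn⟩ := Finset.mem_Ico.1 hm
      rw [coeff_cRev, if_pos (by omega), show n + 2 * d - m = d + (n + d - m) by omega,
        hg _ (by omega) (by omega), map_zero, zero_mul]
  rw [← Finset.sum_range_add_sum_Ico _ (by omega : d ≤ n + d), hmiddle, add_zero]
  refine Finset.sum_nbij' (fun m => d - m) (fun j => d - j) ?_ ?_ ?_ ?_ ?_ <;>
    intro m hm <;> simp only [Finset.mem_range, Finset.mem_Icc] at hm ⊢
  iterate 4 omega
  rw [coeff_cRev, if_pos (by omega), show n + 2 * d - m = n + d + (d - m) by omega,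
    Nat.cast_sub hm.le]
  congr 2
  push_cast
  ring

theorem second_kind_function_formula_general
    (d n : ℕ) (f : Polynomial ℂ) (hdf : f.degree ≤ (d : ℕ))
    (p : Polynomial ℂ) (hp : IsOPA f n p)
    (u : ℕ → ℂ) (hu : ∀ m : ℕ, u m = (p * f * cRev d f).coeff m)
    (φ : Polynomial ℂ) (hφ : φ = cRev n p) :
    ∀ z : ℂ, 1 < ‖z‖ →
      (∮ t in C(0, 1),
        (φ.eval t * f.eval t * (cRev d f).eval t * t ^ (-((n : ℤ) + (d : ℤ)))) / (t - z)) =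
      -(2 * (Real.pi : ℂ) * Complex.I) *
        ∑ j ∈ Finset.Icc 1 d, (starRingEnd ℂ) (u (n + d + j)) * z ^ (-(n : ℤ) - (j : ℤ)) := by
  intro z hz
  have hpn : p.natDegree ≤ n := natDegree_le_iff_degree_le.2 hp.1
  have hfd : f.natDegree ≤ d := natDegree_le_iff_degree_le.2 hdf
  have hrev : φ * f * cRev d f = cRev (n + 2 * d) (p * f * cRev d f) := by
    rw [hφ, two_mul, ← add_assoc,
      cRev_mul (natDegree_mul_le.trans (add_le_add hpn hfd)) (natDegree_cRev_le d f),
      cRev_mul hpn hfd, cRev_cRev hfd]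
    ring
  calc (∮ t in C(0, 1),
        (φ.eval t * f.eval t * (cRev d f).eval t * t ^ (-((n : ℤ) + (d : ℤ)))) / (t - z))
      = ∮ t in C(0, 1), (φ * f * cRev d f).eval t * t ^ (-((n + d : ℕ) : ℤ)) / (t - z) := by
        simp only [eval_mul, Nat.cast_add]
    _ = _ := by
        rw [circleIntegral_eval_mul_zpow_div_sub hz, hrev, sum_range_coeff_cRev_mul_zpow
          fun k hk hkn => hp.coeff_mul_mul_cRev_eq_zero hfd hk hkn]
        simp only [hu]

theorem second_kind_function_formula
    (d n : ℕ) (f : Polynomial ℂ) (hdf : f.degree ≤ (d : ℕ)) (hf0 : f.eval 0 = 1)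
    (p : Polynomial ℂ) (hp : IsOPA f n p)
    (u : ℕ → ℂ) (hu : ∀ m : ℕ, u m = (p * f * cRev d f).coeff m)
    (φ : Polynomial ℂ) (hφ : φ = cRev n p) :
    ∀ z : ℂ, 1 < ‖z‖ →
      (∮ t in C(0, 1),
        (φ.eval t * f.eval t * (cRev d f).eval t * t ^ (-((n : ℤ) + (d : ℤ)))) / (t - z)) =
      -(2 * (Real.pi : ℂ) * Complex.I) *
        ∑ j ∈ Finset.Icc 1 d, (starRingEnd ℂ) (u (n + d + j)) * z ^ (-(n : ℤ) - (j : ℤ)) :=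
  second_kind_function_formula_general d n f hdf p hp u hu φ hφ
end
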